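/- On the quantum Grassmann superalgebra Ω_q(m|n), the q-derivatives satisfy the skew-commutation relations ∂_i ∂_j = θ(ε_i, ε_j) ∂_j ∂_i for i ≠ j, and ∂_j² = 0 for j ∈ I₁ = {m+1,…,m+n}; here θ(ε_i,ε_j) = q^{ε_i∗ε_j − ε_j∗ε_i} if i ∈ I₀ or j ∈ I₀, and θ(ε_i,ε_j) = (−q)^{ε_i∗ε_j − ε_j∗ε_i} if i, j ∈ I₁. In particular for i < j: ∂_j∂_i = q ∂_i∂_j when i ≤ m, and ∂_j∂_i = −q ∂_i∂_j when i, j > m. -/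

import Mathlib

/-- Index set of the monomial basis `x^(β) ⊗ x^μ` of `Ω_q(m|n)`. -/
abbrev OmegaIdx (m n : ℕ) := (Fin m → ℕ) × (Fin n → ℕ)

/-- The underlying vector space of the quantum Grassmann superalgebra `Ω_q(m|n)`. -/
abbrev Omega (k : Type*) [Field k] (m n : ℕ) := OmegaIdx m n →₀ k

/-- Image of the basis vector `x^(β) ⊗ x^μ` under the `q`-derivative `∂_i`:
for `i ∈ I₀`, `∂_i(x^(β)⊗x^μ) = q^{−ε_i∗β} x^(β−ε_i)⊗x^μ`; for `i ∈ I₁`,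
`∂_i(x^(β)⊗x^μ) = q^{−ε_i∗β}(−q)^{−ε_i∗μ} δ_{μ_i,1} x^(β)⊗x^{μ−ε_i}`;
terms with negative exponents vanish. -/
noncomputable def Dimage {k : Type*} [Field k] (q : k) (m n : ℕ)
    (i : Fin (m + n)) (p : OmegaIdx m n) : Omega k m n :=
  if h : (i : ℕ) < m then
    if p.1 ⟨i, h⟩ = 0 then 0
    else (q ^ (-(∑ s ∈ Finset.univ.filter (fun s : Fin m => (s : ℕ) < (i : ℕ)),
          (p.1 s : ℤ)))) • Finsupp.single (p.1 - Pi.single ⟨i, h⟩ 1, p.2) 1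
  else
    if p.2 ⟨(i : ℕ) - m, by have := i.isLt; omega⟩ = 1 then
      (q ^ (-(∑ s, (p.1 s : ℤ))) *
          (-q) ^ (-(∑ t ∈ Finset.univ.filter (fun t : Fin n => (t : ℕ) < (i : ℕ) - m),
            (p.2 t : ℤ)))) •
        Finsupp.single (p.1, p.2 - Pi.single ⟨(i : ℕ) - m, by have := i.isLt; omega⟩ 1) 1
    else 0

/-- The `q`-derivative `∂_i` on `Ω_q(m|n)` as a linear operator. -/
noncomputable def Dop {k : Type*} [Field k] (q : k) (m n : ℕ) (i : Fin (m + n)) :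
    Omega k m n →ₗ[k] Omega k m n :=
  Finsupp.lsum k fun p => LinearMap.toSpanSingleton k (Omega k m n) (Dimage q m n i p)

/-- The bicharacter value `θ(ε_i,ε_j)`: `q^{ε_i∗ε_j − ε_j∗ε_i}` if `i ∈ I₀` or
`j ∈ I₀`, and `(−q)^{ε_i∗ε_j − ε_j∗ε_i}` if `i, j ∈ I₁`. -/
noncomputable def theta {k : Type*} [Field k] (q : k) (m : ℕ) {N : ℕ} (i j : Fin N) : k :=
  if (i : ℕ) < m ∨ (j : ℕ) < m then
    q ^ (if j < i then (1 : ℤ) else if i < j then -1 else 0)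
  else (-q) ^ (if j < i then (1 : ℤ) else if i < j then -1 else 0)


/-!
On a basis monomial `p`, `∂_i` either vanishes or returns `(scale q i p)⁻¹` times the monomial
`p - ε_i`; it is nonzero exactly when the `i`-th exponent of `p` can be lowered (it is positive,
and equals `1` in the odd case). For `i ≠ j` the two lowerings commute and neither affects
whether the other is possible, so `∂_i ∂_j` and `∂_j ∂_i` send `p` to multiples of the same
monomial `p - ε_i - ε_j`. Lowering the `j`-th exponent changes `scale q i` only when `j < i`,
and then by the factor `q_j = ±q` given by the parity of `j`; comparing the two orders gives
the quotient `θ(ε_i, ε_j) = [j < i] q_j / [i < j] q_i`. An odd exponent `1` becomes `0`, which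
cannot be lowered again, so `∂_j² = 0` for odd `j`.
-/

open Finset

theorem sum_eq_sum_sub_single_add {ι : Type*} [DecidableEq ι] (S : Finset ι) {f : ι → ℕ} {a : ι}
    (ha : f a ≠ 0) :
    ∑ s ∈ S, f s = ∑ s ∈ S, (f - Pi.single a 1 : ι → ℕ) s + if a ∈ S then 1 else 0 := by
  have hf : f = (f - Pi.single a 1) + Pi.single a 1 := by
    funext s
    rcases eq_or_ne s a with rfl | hs <;> simp [*]
    omega
  conv_lhs => rw [hf]
  simp only [Pi.add_apply, sum_add_distrib, sum_pi_single']

section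
variable {k : Type*} [Field k]

def qParity (q : k) (m : ℕ) {N : ℕ} (i : Fin N) : k := if (i : ℕ) < m then q else -q

theorem qParity_ne_zero {q : k} (hq : q ≠ 0) (m : ℕ) {N : ℕ} (i : Fin N) :
    qParity q m i ≠ 0 := by
  unfold qParity; split_ifs <;> simpa

theorem theta_eq_div (q : k) (m : ℕ) {N : ℕ} (i j : Fin N) :
    theta q m i j =
      (if j < i then qParity q m j else 1) / (if i < j then qParity q m i else 1) := by
  rcases lt_trichotomy i j with h | rfl | h
  · have : (i : ℕ) < j := h
    by_cases hi : (i : ℕ) < m <;> simp [theta, qParity, h, h.not_gt, hi]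
    intro; omega
  · simp [theta]
  · have : (j : ℕ) < i := h
    by_cases hj : (j : ℕ) < m <;> simp [theta, qParity, h, h.not_gt, hj]
    omega

end

namespace OmegaIdx
variable {k : Type*} [Field k] {q : k} {m n : ℕ} {i j : Fin (m + n)} {p : OmegaIdx m n}

def unit (i : Fin (m + n)) : OmegaIdx m n :=
  if h : (i : ℕ) < m then (Pi.single ⟨i, h⟩ 1, 0) else (0, Pi.single ⟨i - m, by omega⟩ 1)

def coord (i : Fin (m + n)) (p : OmegaIdx m n) : ℕ :=
  if h : (i : ℕ) < m then p.1 ⟨i, h⟩ else p.2 ⟨i - m, by omega⟩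

def Lowerable (i : Fin (m + n)) (p : OmegaIdx m n) : Prop :=
  if (i : ℕ) < m then coord i p ≠ 0 else coord i p = 1

theorem coord_sub_unit (i j : Fin (m + n)) (p : OmegaIdx m n) :
    coord i (p - unit j) = coord i p - if i = j then 1 else 0 := by
  by_cases hi : (i : ℕ) < m <;> by_cases hj : (j : ℕ) < m <;>
    simp [coord, unit, hi, hj, Pi.single_apply, Fin.ext_iff] <;> split_ifs <;> omega

theorem sub_unit_comm (i j : Fin (m + n)) (p : OmegaIdx m n) :
    p - unit i - unit j = p - unit j - unit i :=
  tsub_right_comm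

theorem Lowerable.coord_ne_zero (h : Lowerable i p) : coord i p ≠ 0 := by
  unfold Lowerable at h; split_ifs at h <;> omega

theorem lowerable_sub_unit_iff (hij : i ≠ j) : Lowerable i (p - unit j) ↔ Lowerable i p := by
  simp [Lowerable, coord_sub_unit, hij]

theorem Lowerable.not_lowerable_sub_unit (h : Lowerable i p) (hi : m ≤ i) :
    ¬ Lowerable i (p - unit i) := by
  simp_all [Lowerable, coord_sub_unit, hi.not_gt]

/-- For `i < m` the second sum is empty, `i - m` being truncated to `0`. -/
def scale (q : k) (i : Fin (m + n)) (p : OmegaIdx m n) : k :=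
  q ^ (∑ s ∈ univ.filter (fun s : Fin m => (s : ℕ) < i), p.1 s) *
    (-q) ^ (∑ t ∈ univ.filter (fun t : Fin n => (t : ℕ) < i - m), p.2 t)

theorem scale_eq_mul_scale_sub_unit (q : k) (i : Fin (m + n)) (hj : coord j p ≠ 0) :
    scale q i p = (if j < i then qParity q m j else 1) * scale q i (p - unit j) := by
  by_cases hjm : (j : ℕ) < m
  · simp only [coord, dif_pos hjm] at hj
    rw [scale, scale, sum_eq_sum_sub_single_add _ hj]
    simp [unit, hjm, qParity, pow_add]
    split_ifs <;> ring
  · simp only [coord, dif_neg hjm] at hj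
    rw [scale, scale, sum_eq_sum_sub_single_add _ hj]
    have hlt : (j : ℕ) - m < i - m ↔ j < i := by rw [Fin.lt_def]; omega
    simp [unit, hjm, qParity, pow_add, hlt]
    split_ifs <;> ring

theorem inv_scale_mul_inv_scale_sub_unit (hq : q ≠ 0) (hi : coord i p ≠ 0)
    (hj : coord j p ≠ 0) :
    (scale q j p)⁻¹ * (scale q i (p - unit j))⁻¹ =
      theta q m i j * ((scale q i p)⁻¹ * (scale q j (p - unit i))⁻¹) := by
  rw [scale_eq_mul_scale_sub_unit q i hj, scale_eq_mul_scale_sub_unit q j hi, theta_eq_div]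
  have hji : (if j < i then qParity q m j else 1) ≠ 0 := by
    split_ifs
    exacts [qParity_ne_zero hq m j, one_ne_zero]
  field_simp

end OmegaIdx

section
variable {k : Type*} [Field k] {q : k} {m n : ℕ} {i j : Fin (m + n)} {p : OmegaIdx m n}
open OmegaIdx

theorem Dimage_of_lowerable (h : Lowerable i p) :
    Dimage q m n i p = (scale q i p)⁻¹ • Finsupp.single (p - unit i) 1 := by
  by_cases hi : (i : ℕ) < m
  · simp only [Lowerable, coord, if_pos hi, dif_pos hi] at h
    have hμ : univ.filter (fun t : Fin n => (t : ℕ) < i - m) = ∅ := by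
      ext t; simp; omega
    have hsub : p - unit i = (p.1 - Pi.single ⟨i, hi⟩ 1, p.2) := by
      simp [unit, hi, Prod.ext_iff]
    rw [Dimage, dif_pos hi, if_neg h, scale, hμ, sum_empty, pow_zero, mul_one, zpow_neg,
      ← Nat.cast_sum, zpow_natCast, hsub]
  · simp only [Lowerable, coord, if_neg hi, dif_neg hi] at h
    have hβ : univ.filter (fun s : Fin m => (s : ℕ) < i) = univ := by
      ext s; simp; omega
    have hsub : p - unit i = (p.1, p.2 - Pi.single ⟨i - m, by omega⟩ 1) := by
      simp [unit, hi, Prod.ext_iff]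
    rw [Dimage, dif_neg hi, if_pos h, scale, hβ, zpow_neg, zpow_neg, ← Nat.cast_sum,
      ← Nat.cast_sum, zpow_natCast, zpow_natCast, mul_inv, hsub]

theorem Dimage_of_not_lowerable (h : ¬ Lowerable i p) : Dimage q m n i p = 0 := by
  by_cases hi : (i : ℕ) < m <;> simp_all [Lowerable, coord, Dimage]

theorem Dop_single (p : OmegaIdx m n) (a : k) :
    Dop q m n i (Finsupp.single p a) = a • Dimage q m n i p := by
  simp [Dop]

theorem Dop_Dimage_comm (hq : q ≠ 0) (hij : i ≠ j) (p : OmegaIdx m n) :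
    Dop q m n i (Dimage q m n j p) = theta q m i j • Dop q m n j (Dimage q m n i p) := by
  by_cases hj : Lowerable j p <;> by_cases hi : Lowerable i p
  · have hi' := (lowerable_sub_unit_iff hij).2 hi
    have hj' := (lowerable_sub_unit_iff hij.symm).2 hj
    simp only [Dimage_of_lowerable, hi, hj, hi', hj', map_smul, Dop_single, one_mul, smul_smul,
      sub_unit_comm i j p]
    rw [inv_scale_mul_inv_scale_sub_unit hq hi.coord_ne_zero hj.coord_ne_zero]
  · have hi' := mt (lowerable_sub_unit_iff hij).1 hi
    simp [Dimage_of_lowerable hj, Dimage_of_not_lowerable hi, Dimage_of_not_lowerable hi',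
      Dop_single]
  · have hj' := mt (lowerable_sub_unit_iff hij.symm).1 hj
    simp [Dimage_of_lowerable hi, Dimage_of_not_lowerable hj, Dimage_of_not_lowerable hj',
      Dop_single]
  · simp [Dimage_of_not_lowerable, hi, hj]

theorem Dop_Dimage_self (hi : m ≤ i) (p : OmegaIdx m n) :
    Dop q m n i (Dimage q m n i p) = 0 := by
  by_cases h : Lowerable i p
  · simp [Dimage_of_lowerable h, Dop_single, Dimage_of_not_lowerable (h.not_lowerable_sub_unit hi)]
  · simp [Dimage_of_not_lowerable h]

theorem Dop_comp_Dop_comm (hq : q ≠ 0) (hij : i ≠ j) :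
    (Dop q m n i).comp (Dop q m n j) = theta q m i j • (Dop q m n j).comp (Dop q m n i) :=
  Finsupp.lhom_ext fun p a => by
    simp [Dop_single, Dop_Dimage_comm hq hij, smul_comm a]

theorem Dop_comp_Dop_self (hi : m ≤ i) : (Dop q m n i).comp (Dop q m n i) = 0 :=
  Finsupp.lhom_ext fun p a => by simp [Dop_single, Dop_Dimage_self hi]

theorem Dop_comp_Dop_of_lt (hq : q ≠ 0) (hij : i < j) :
    (Dop q m n j).comp (Dop q m n i) = qParity q m i • (Dop q m n i).comp (Dop q m n j) := by
  rw [Dop_comp_Dop_comm hq hij.ne, smul_smul, theta_eq_div, if_neg hij.not_gt, if_pos hij,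
    one_div, mul_inv_cancel₀ (qParity_ne_zero hq m i), one_smul]

end

/-- The `q`-derivatives on `Ω_q(m|n)` satisfy `∂_i ∂_j = θ(ε_i,ε_j) ∂_j ∂_i` for
`i ≠ j`, `∂_j² = 0` for `j ∈ I₁`; in particular for `i < j`: `∂_j∂_i = q ∂_i∂_j`
when `i ∈ I₀`, and `∂_j∂_i = −q ∂_i∂_j` when `i, j ∈ I₁`. -/
theorem Dop_relations {k : Type*} [Field k] (q : k) (hq : q ≠ 0) (m n : ℕ) :
    (∀ i j : Fin (m + n), i ≠ j →
      (Dop q m n i).comp (Dop q m n j) = theta q m i j • (Dop q m n j).comp (Dop q m n i)) ∧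
    (∀ j : Fin (m + n), m ≤ (j : ℕ) → (Dop q m n j).comp (Dop q m n j) = 0) ∧
    (∀ i j : Fin (m + n), i < j → (i : ℕ) < m →
      (Dop q m n j).comp (Dop q m n i) = q • (Dop q m n i).comp (Dop q m n j)) ∧
    (∀ i j : Fin (m + n), i < j → m ≤ (i : ℕ) →
      (Dop q m n j).comp (Dop q m n i) = (-q) • (Dop q m n i).comp (Dop q m n j)) := by
  refine ⟨fun i j => Dop_comp_Dop_comm hq, fun j => Dop_comp_Dop_self, fun i j hij hi => ?_,
    fun i j hij hi => ?_⟩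
  · rw [Dop_comp_Dop_of_lt hq hij, qParity, if_pos hi]
  · rw [Dop_comp_Dop_of_lt hq hij, qParity, if_neg hi.not_gt]
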